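/- arXiv:2305.04479 — 3 statements merged into one kernel-verified Lean document; each statement's English description precedes it below -/
import Mathlib

section
/- Let G be a maximal bowless directed mixed graph (BDMG) on a finite node set V, and let P be a probability measure on a product measurable space indexed by V. If P is Markovian to G (satisfies the global Markov property), then P satisfies the pairwise Markov property with respect to G: i ⊥_P j | an({i,j}) for every non-adjacent pair i,j. -/
open MeasureTheory ProbabilityTheory

namespace CausalAxioms

/-! ### Mixed graphs (arrows and arcs) -/

structure MixedGraph (V : Type) where
  arrow : V → V → Prop
  arc : V → V → Prop

namespace MixedGraph

variable {V : Type} (G : MixedGraph V)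

/-- Two nodes are adjacent if they are joined by an arrow (in either direction) or an arc. -/
def Adj (i j : V) : Prop :=
  G.arrow i j ∨ G.arrow j i ∨ G.arc i j ∨ G.arc j i

/-- A bowless directed mixed graph: arcs are symmetric, there are no self-loops, and no pair of
nodes is joined by both an arrow and an arc (no bows). -/
def IsBDMG : Prop :=
  (∀ i j, G.arc i j → G.arc j i) ∧ (∀ i, ¬ G.arc i i) ∧ (∀ i, ¬ G.arrow i i) ∧
    ∀ i j, G.arc i j → ¬ G.arrow i j ∧ ¬ G.arrow j i

/-- The set of ancestors of `j`: nodes with a directed path to `j` (excluding `j` itself). -/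
def anc (j : V) : Set V := {i | i ≠ j ∧ Relation.TransGen G.arrow i j}

/-- Ancestors of a set `A`: `an(A) = (⋃ j ∈ A, an(j)) \ A`. -/
def ancSet (A : Set V) : Set V := (⋃ j ∈ A, G.anc j) \ A

/-- The strongly connected component of `i`. -/
def sc (i : V) : Set V :=
  {j | j = i ∨ (Relation.TransGen G.arrow i j ∧ Relation.TransGen G.arrow j i)}

/-- Parents of `i`. -/
def pa (i : V) : Set V := {j | G.arrow j i}

/-- `pa({i,j}) = (pa(i) ∪ pa(j)) \ {i,j}`. -/
def paPair (i j : V) : Set V := (G.pa i ∪ G.pa j) \ {i, j}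

/-- No directed cycles. -/
def Acyclic : Prop := ∀ i, ¬ Relation.TransGen G.arrow i i

/-- A directed ancestral graph: a BDMG with no directed cycles and no arc `i ↔ j`
with `i ∈ an(j)`. -/
def DirectedAncestral : Prop :=
  G.IsBDMG ∧ G.Acyclic ∧ ∀ i j, G.arc i j → i ∉ G.anc j

/-- The acyclification of a directed mixed graph. -/
def acy : MixedGraph V where
  arrow j i := (∃ k ∈ G.sc i, G.arrow j k) ∧ j ∉ G.sc i
  arc i j := i ≠ j ∧ ∃ i' ∈ G.sc i, ∃ j' ∈ G.sc j, i' = j' ∨ G.arc i' j'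

end MixedGraph

/-- A direction/type for an edge along a path: a forward arrow, a backward arrow, or an arc. -/
inductive EDir : Type
  | fwd | bwd | biarc

/-- `G.IsEdgeDir d a b` : the graph has an edge of type `d` between `a` and `b`. -/
def MixedGraph.IsEdgeDir {V : Type} (G : MixedGraph V) : EDir → V → V → Prop
  | .fwd, a, b => G.arrow a b
  | .bwd, a, b => G.arrow b a
  | .biarc, a, b => G.arc a b ∨ G.arc b a

/-- A path in a mixed graph, recorded by its node sequence `v 0, …, v n` and the type of
each edge; all nodes are distinct. -/
structure PathIn {V : Type} (G : MixedGraph V) where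
  n : ℕ
  v : ℕ → V
  e : ℕ → EDir
  one_le : 1 ≤ n
  edge : ∀ r, r < n → G.IsEdgeDir (e r) (v r) (v (r + 1))
  inj : ∀ r, r ≤ n → ∀ s, s ≤ n → v r = v s → r = s

namespace PathIn

variable {V : Type} {G : MixedGraph V} (p : PathIn G)

/-- Edge `r` has an arrowhead at its right endpoint `v (r+1)`. -/
def headRight (r : ℕ) : Prop := p.e r = EDir.fwd ∨ p.e r = EDir.biarc

/-- Edge `r` has an arrowhead at its left endpoint `v r`. -/
def headLeft (r : ℕ) : Prop := p.e r = EDir.bwd ∨ p.e r = EDir.biarc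

/-- The inner node `v r` (for `1 ≤ r ≤ n-1`) is a collider. -/
def Collider (r : ℕ) : Prop := p.headRight (r - 1) ∧ p.headLeft r

/-- The path is σ-connecting given `C`. -/
def SigmaConnecting (C : Set V) : Prop :=
  ∀ r, 1 ≤ r → r < p.n →
    (p.Collider r → p.v r ∈ C ∪ G.ancSet C) ∧
    (¬ p.Collider r →
      p.v r ∉ C ∨
        ((p.headLeft (r - 1) → p.v (r - 1) ∈ G.sc (p.v r)) ∧
          (p.headRight r → p.v (r + 1) ∈ G.sc (p.v r))))

/-- The path is m-connecting given `C`. -/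
def MConnecting (C : Set V) : Prop :=
  ∀ r, 1 ≤ r → r < p.n →
    (p.Collider r → p.v r ∈ C ∪ G.ancSet C) ∧ (¬ p.Collider r → p.v r ∉ C)

end PathIn

/-- σ-separation of `A` and `B` given `C`. -/
def SigmaSep {V : Type} (G : MixedGraph V) (A B C : Set V) : Prop :=
  ¬ ∃ p : PathIn G, p.v 0 ∈ A ∧ p.v p.n ∈ B ∧ p.SigmaConnecting C

/-- m-separation of `A` and `B` given `C`. -/
def MSep {V : Type} (G : MixedGraph V) (A B C : Set V) : Prop :=
  ¬ ∃ p : PathIn G, p.v 0 ∈ A ∧ p.v p.n ∈ B ∧ p.MConnecting C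

/-- A separable pair: a non-adjacent pair that can be σ-separated by some set. -/
def SeparablePair {V : Type} (G : MixedGraph V) (i j : V) : Prop :=
  ¬ G.Adj i j ∧ ∃ C : Set V, i ∉ C ∧ j ∉ C ∧ SigmaSep G {i} {j} C

/-- A separable pair in the m-separation sense. -/
def MSeparablePair {V : Type} (G : MixedGraph V) (i j : V) : Prop :=
  ¬ G.Adj i j ∧ ∃ C : Set V, i ∉ C ∧ j ∉ C ∧ MSep G {i} {j} C

/-- A graph is maximal if every non-adjacent pair is separable. -/
def MaximalGraph {V : Type} (G : MixedGraph V) : Prop :=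
  ∀ i j, i ≠ j → ¬ G.Adj i j → SeparablePair G i j

/-- Two graphs are Markov equivalent if they induce the same σ-separations. -/
def MarkovEquiv {V : Type} (G₁ G₂ : MixedGraph V) : Prop :=
  ∀ A B C : Set V, SigmaSep G₁ A B C ↔ SigmaSep G₂ A B C

/-- A primitive inducing path (PIP): a path with at least 3 nodes, all of whose edges are arcs or
arrows within a strongly connected component (except that the first edge may be `i → q₁` and the
last may be `q_r ← j`), and all of whose inner nodes are ancestors of one of the endpoints. -/
def IsPIP {V : Type} (G : MixedGraph V) (p : PathIn G) : Prop :=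
  2 ≤ p.n ∧
    (∀ r, r < p.n →
      p.e r = EDir.biarc ∨ p.v r ∈ G.sc (p.v (r + 1)) ∨
        (r = 0 ∧ p.e r = EDir.fwd) ∨ (r + 1 = p.n ∧ p.e r = EDir.bwd)) ∧
    ∀ r, 1 ≤ r → r < p.n → p.v r ∈ G.ancSet {p.v 0, p.v p.n}

/-! ### Conditional independence for coordinates of a product space -/

variable {V : Type} {X : V → Type} [∀ i, MeasurableSpace (X i)]

/-- The σ-algebra on `∀ i, X i` generated by the coordinates in `A`. -/
def coordσ (X : V → Type) [∀ i, MeasurableSpace (X i)] (A : Set V) :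
    MeasurableSpace (∀ i, X i) :=
  MeasurableSpace.comap (A.restrict) MeasurableSpace.pi

/-- `CI P A B C` : the coordinates in `A` are conditionally independent of the coordinates in
`B` given the coordinates in `C`, under the measure `P`. -/
def CI (P : Measure (∀ i, X i)) (A B C : Set V) : Prop :=
  ∀ s t : Set (∀ i, X i),
    MeasurableSet[coordσ X A] s → MeasurableSet[coordσ X B] t →
      (P⟦s ∩ t | coordσ X C⟧) =ᵐ[P] (P⟦s | coordσ X C⟧) * (P⟦t | coordσ X C⟧)

/-- The intersection property. -/
def IntersectionProp (P : Measure (∀ i, X i)) : Prop :=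
  ∀ A B C D : Set V, Disjoint A B → Disjoint A C → Disjoint A D → Disjoint B C →
    Disjoint B D → Disjoint C D →
    CI P A B (C ∪ D) → CI P A D (C ∪ B) → CI P A (B ∪ D) C

/-- The composition property. -/
def CompositionProp (P : Measure (∀ i, X i)) : Prop :=
  ∀ A B C D : Set V, Disjoint A B → Disjoint A C → Disjoint A D → Disjoint B C →
    Disjoint B D → Disjoint C D →
    CI P A B C → CI P A D C → CI P A (B ∪ D) C

/-- Singleton-transitivity. -/
def SingletonTransProp (P : Measure (∀ i, X i)) : Prop :=
  ∀ i j k : V, ∀ C : Set V, i ≠ j → i ≠ k → j ≠ k → i ∉ C → j ∉ C → k ∉ C →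
    CI P {i} {j} C → CI P {i} {j} (C ∪ {k}) →
      CI P {i} {k} C ∨ CI P {j} {k} C

/-- The global Markov property with respect to σ-separation. -/
def GlobalMarkovSigma (G : MixedGraph V) (P : Measure (∀ i, X i)) : Prop :=
  ∀ A B C : Set V, Disjoint A B → Disjoint A C → Disjoint B C →
    SigmaSep G A B C → CI P A B C

/-- The pairwise Markov property: `i ⊥ j | an({i,j})` for every non-adjacent pair. -/
def PairwiseMarkov (G : MixedGraph V) (P : Measure (∀ i, X i)) : Prop :=
  ∀ i j : V, i ≠ j → ¬ G.Adj i j → CI P {i} {j} (G.ancSet {i, j})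

/-- The converse pairwise Markov property: every edge yields a conditional dependence. -/
def ConversePairwiseMarkov (G : MixedGraph V) (P : Measure (∀ i, X i)) : Prop :=
  ∀ i j : V, i ≠ j → G.Adj i j → ¬ CI P {i} {j} (G.ancSet {i, j})

/-! ### Interventional families -/

variable (Pdo : V → Measure (∀ i, X i))

/-- The set of causes of `k`. -/
def cause (k : V) : Set V := {i | i ≠ k ∧ ¬ CI (Pdo i) {i} {k} ∅}

/-- The set of effects of `i`. -/
def effect (i : V) : Set V := {k | k ≠ i ∧ i ∈ cause Pdo k}

/-- `cause(A) = (⋃ k ∈ A, cause(k)) \ A`. -/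
def causeSet (A : Set V) : Set V := (⋃ k ∈ A, cause Pdo k) \ A

/-- The causal cycle containing `i`. -/
def cc (i : V) : Set V := {k | k = i ∨ (k ∈ cause Pdo i ∧ i ∈ cause Pdo k)}

/-- A transitive interventional family. -/
def TransitiveFam : Prop :=
  ∀ i j k : V, i ≠ j → j ≠ k → i ≠ k →
    i ∈ cause Pdo j → j ∈ cause Pdo k → i ∈ cause Pdo k

/-- Given a candidate direct-cause assignment `dc`, the `i`-intervened causes of `k`:
the ancestors of `k` in the graph with arrows `a → b` iff `a ∈ dc b`, with all arrows
pointing to `i` removed. -/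
def iotaFrom (dc : V → Set V) (i k : V) : Set V :=
  MixedGraph.anc ⟨fun a b => a ∈ dc b ∧ b ≠ i, fun _ _ => False⟩ k

/-- The first step of the iterative procedure defining direct causes. -/
def dcInit : V → Set V := fun k =>
  {i ∈ cause Pdo k | ¬ CI (Pdo i) {i} {k} (cause Pdo k \ {i})}

/-- One step of the iterative procedure defining direct causes. -/
def dcStep (dc : V → Set V) : V → Set V := fun k =>
  {i ∈ dc k | ¬ CI (Pdo i) {i} {k} (iotaFrom dc i k \ {i})}

/-- The set of direct causes of each node, obtained by iterating the procedure to its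
fixed point (reached after at most `|V|²` steps). -/
def dcause [Fintype V] : V → Set V :=
  (dcStep Pdo)^[Fintype.card V * Fintype.card V] (dcInit Pdo)

/-- The set of intervened causes of `k` after intervention on `i`. -/
def iotaCause [Fintype V] (i k : V) : Set V := iotaFrom (dcause Pdo) i k

/-- `ιcause_i(A) = (⋃ k ∈ A, ιcause_i(k)) \ A`. -/
def iotaCauseSet [Fintype V] (i : V) (A : Set V) : Set V :=
  (⋃ k ∈ A, iotaCause Pdo i k) \ A

/-- The causal structure `S(𝒫_do)`. -/
def Sgraph [Fintype V] : MixedGraph V :=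
  ⟨fun a b => a ∈ dcause Pdo b, fun _ _ => False⟩

/-- The `i`-intervened causal structure `S_i(𝒫_do)`. -/
def Sigraph [Fintype V] (i : V) : MixedGraph V :=
  ⟨fun a b => a ∈ dcause Pdo b ∧ b ≠ i, fun _ _ => False⟩

/-- The condition for placing an arc between `j` and `k` in the `i`-intervened graph. -/
def GiArcCond [Fintype V] (i j k : V) : Prop :=
  j ≠ i ∧ k ≠ i ∧ j ≠ k ∧ j ∉ dcause Pdo k ∧ k ∉ dcause Pdo j ∧
    ¬ CI (Pdo i) {j} {k} (iotaCauseSet Pdo i {j, k})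

/-- The `i`-intervened graph `G_i(𝒫_do)`. -/
def Gi [Fintype V] (i : V) : MixedGraph V where
  arrow a b := a ∈ dcause Pdo b ∧ b ≠ i
  arc j k := GiArcCond Pdo i j k ∨ GiArcCond Pdo i k j

/-- The condition for placing an arc between `j` and `k` in the causal graph. -/
def GcArcCond [Fintype V] (j k : V) : Prop :=
  j ≠ k ∧ j ∉ dcause Pdo k ∧ k ∉ dcause Pdo j ∧
    ∀ i, i ≠ j → i ≠ k → (Gi Pdo i).arc j k

/-- The causal graph `G(𝒫_do)`. -/
def Gcausal [Fintype V] : MixedGraph V where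
  arrow a b := a ∈ dcause Pdo b
  arc j k := GcArcCond Pdo j k ∨ GcArcCond Pdo k j

/-- An observable interventional family (Axiom 2). -/
def Observable [Fintype V] (P : Measure (∀ i, X i)) : Prop :=
  (∀ j k : V, SeparablePair (Gcausal Pdo) j k → ∀ i, i ≠ j → i ≠ k →
      CI (Pdo i) {j} {k} (iotaCauseSet Pdo i {j, k}) →
        CI P {j} {k} (causeSet Pdo {j, k})) ∧
  ∀ k, ∀ i ∈ cause Pdo k,
      CI (Pdo i) {i} {k} (iotaCauseSet Pdo i {i, k}) →
        CI P {i} {k} (causeSet Pdo {i, k})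

/-- A strongly observable interventional family (Axioms 2 and 3). -/
def StronglyObservable [Fintype V] (P : Measure (∀ i, X i)) : Prop :=
  Observable Pdo P ∧
  (∀ i j k : V, i ≠ j → i ≠ k → j ≠ k →
      CI P {j} {k} (causeSet Pdo {j, k}) →
        CI (Pdo i) {j} {k} (iotaCauseSet Pdo i {j, k})) ∧
  ∀ k, ∀ i ∈ cause Pdo k,
      CI P {i} {k} (causeSet Pdo {i, k}) →
        CI (Pdo i) {i} {k} (iotaCauseSet Pdo i {i, k})

/-! ### Quantifiable interventional families -/

/-- `κ` is a regular conditional probability for `P` given the coordinates in `C`. -/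
def IsRCP (P : Measure (∀ i, X i)) (C : Set V)
    (κ : Kernel (∀ j : C, X j) (∀ i, X i)) : Prop :=
  IsMarkovKernel κ ∧
    ∀ F : Set (∀ i, X i), MeasurableSet F →
      ∀ S : Set (∀ j : C, X j), MeasurableSet S →
        P (F ∩ C.restrict ⁻¹' S) = ∫⁻ y in S, κ y F ∂(P.map C.restrict)

/-- Two measures are equivalent if they have the same null sets. -/
def MeasEquiv {α : Type} [MeasurableSpace α] (μ ν : Measure α) : Prop :=
  μ ≪ ν ∧ ν ≪ μ

/-- `{𝒫_do, P}` is compatible: for all distinct `i,k`, the marginal of `P_do(i)` on the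
coordinates `cause(k) ∪ {k}` is equivalent to the corresponding marginal of `P`. -/
def Compatible (P : Measure (∀ i, X i)) : Prop :=
  ∀ i k : V, i ≠ k →
    MeasEquiv ((Pdo i).map (insert k (cause Pdo k)).restrict)
      (P.map (insert k (cause Pdo k)).restrict)

/-- A quantifiable interventional family (Axiom 4). -/
def Quantifiable (P : Measure (∀ i, X i)) : Prop :=
  Compatible Pdo P ∧
    ∀ i k : V, i ≠ k →
      ∃ κ₁ : Kernel (∀ j : (insert i (cause Pdo k) : Set V), X j) (∀ i, X i),
      ∃ κ₂ : Kernel (∀ j : (cause Pdo k : Set V), X j) (∀ i, X i),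
        IsRCP (Pdo i) (insert i (cause Pdo k)) κ₁ ∧
        IsRCP P (cause Pdo k) κ₂ ∧
        ∀ x, ((κ₁ x).map fun y => y k) =
          ((κ₂ (Set.restrict₂ (Set.subset_insert i (cause Pdo k)) x)).map fun y => y k)

/-- A bivariate-quantifiable interventional family (Axioms 4 and 5). -/
def BivQuantifiable (P : Measure (∀ i, X i)) : Prop :=
  Quantifiable Pdo P ∧
    ∀ i j k : V, i ≠ j → i ≠ k → j ≠ k → j ∉ cause Pdo k → k ∉ cause Pdo j →
      ∃ κ₁ : Kernel (∀ l : (insert i (causeSet Pdo {j, k}) : Set V), X l) (∀ i, X i),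
      ∃ κ₂ : Kernel (∀ l : (causeSet Pdo {j, k} : Set V), X l) (∀ i, X i),
        IsRCP (Pdo i) (insert i (causeSet Pdo {j, k})) κ₁ ∧
        IsRCP P (causeSet Pdo {j, k}) κ₂ ∧
        ∀ x, ((κ₁ x).map fun y => (y j, y k)) =
          ((κ₂ (Set.restrict₂ (Set.subset_insert i (causeSet Pdo {j, k})) x)).map
            fun y => (y j, y k))

/-! ### Structural causal models -/

/-- A structural causal model together with its standard single-node interventions. -/
structure SCM (V : Type) (X : V → Type) [∀ i, MeasurableSpace (X i)]
    (Ω : Type) [MeasurableSpace Ω] (E : V → Type) [∀ i, MeasurableSpace (E i)] where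
  /-- the associated graph -/
  G : MixedGraph V
  /-- the underlying probability measure -/
  μ : Measure Ω
  prob : IsProbabilityMeasure μ
  /-- the noise variables -/
  ε : ∀ i, Ω → E i
  ε_meas : ∀ i, Measurable (ε i)
  /-- the structural assignments -/
  φ : ∀ i, (∀ j : (G.pa i : Set V), X j) → E i → X i
  /-- the solution of the system of structural equations -/
  sol : Ω → ∀ i, X i
  sol_meas : Measurable sol
  sol_eq : ∀ ω i, sol ω i = φ i ((G.pa i).restrict (sol ω)) (ε i ω)
  /-- noise vectors on disjoint sets `A`, `B` are independent iff no arc joins `A` and `B` -/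
  noise_indep : ∀ A B : Set V, Disjoint A B →
    (IndepFun (fun ω => fun a : A => ε a ω) (fun ω => fun b : B => ε b ω) μ ↔
      ¬ ∃ a ∈ A, ∃ b ∈ B, G.arc a b ∨ G.arc b a)
  /-- the intervention variables `X̃_i` -/
  tilde : ∀ i, Ω → X i
  tilde_meas : ∀ i, Measurable (tilde i)
  /-- `X̃_i` is distributed as `X_i` -/
  tilde_law : ∀ i, μ.map (tilde i) = μ.map fun ω => sol ω i
  /-- `X̃_i` is independent of all the noises -/
  tilde_indep : ∀ i, IndepFun (tilde i) (fun ω => fun j : V => ε j ω) μ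
  /-- the solution of the intervened system of structural equations -/
  isol : ∀ i, Ω → ∀ j, X j
  isol_meas : ∀ i, Measurable (isol i)
  isol_self : ∀ i ω, isol i ω i = tilde i ω
  isol_eq : ∀ i j, j ≠ i → ∀ ω, isol i ω j = φ j ((G.pa j).restrict (isol i ω)) (ε j ω)

variable {Ω : Type} [MeasurableSpace Ω] {E : V → Type} [∀ i, MeasurableSpace (E i)]

/-- The family of standard-intervention distributions `𝒫_do(𝒞)`. -/
noncomputable def SCM.pdo (M : SCM V X Ω E) : V → Measure (∀ i, X i) :=
  fun i => M.μ.map (M.isol i)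

/-- The joint (observational) distribution `P_𝒞` of the SCM. -/
noncomputable def SCM.law (M : SCM V X Ω E) : Measure (∀ i, X i) := M.μ.map M.sol

instance (M : SCM V X Ω E) (i : V) : IsProbabilityMeasure (M.pdo i) := by
  haveI := M.prob
  exact Measure.isProbabilityMeasure_map (M.isol_meas i).aemeasurable

instance (M : SCM V X Ω E) : IsProbabilityMeasure M.law := by
  haveI := M.prob
  exact Measure.isProbabilityMeasure_map M.sol_meas.aemeasurable

/-- The edge-cause condition: every arrow `i → j` of the SCM graph makes `i` a direct cause
of `j` for the interventional family. -/
def SCM.EdgeCause [Fintype V] (M : SCM V X Ω E) : Prop :=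
  ∀ i j, M.G.arrow i j → i ∈ dcause M.pdo j

/-!
Suppose `i` and `j` are σ-separated by some set `C` but a path `p` σ-connects them given
`an({i,j})`. Every inner node of `p` is an ancestor of `i` or `j`: a collider because it lies in
`an({i,j}) ∪ an(an({i,j}))`, a non-collider because it has a directed path along `p` to a collider
or an endpoint. So every non-collider lies in `an({i,j})`, and σ-connection forces the arrowheads
of its edges into its strongly connected component: no conditioning set blocks it. A collider
blocked given `C` is an ancestor of an endpoint; following `p` until it first meets a directed path
from that collider to the endpoint, and then that directed path, gives a path with fewer blocked
colliders whose new non-colliders descend from the blocked collider and hence avoid `C`.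
Iterating produces a path σ-connecting `i` and `j` given `C`, a contradiction; the global Markov
property then turns `i ⊥_σ j | an({i,j})` into conditional independence.
-/

namespace EDir

def flip : EDir → EDir
  | .fwd => .bwd
  | .bwd => .fwd
  | .biarc => .biarc

end EDir

section Walks

open Relation

variable {α : Type*} {r : α → α → Prop}

lemma exists_walk_of_reflTransGen {a b : α} (h : ReflTransGen r a b) :
    ∃ (m : ℕ) (d : ℕ → α), d 0 = a ∧ d m = b ∧ ∀ k < m, r (d k) (d (k + 1)) := by
  induction h using ReflTransGen.head_induction_on with
  | refl => exact ⟨0, fun _ => b, rfl, rfl, by simp⟩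
  | head hac _ ih =>
    obtain ⟨m, d, hd0, hdm, hd⟩ := ih
    refine ⟨m + 1, fun k => if k = 0 then _ else d (k - 1), rfl, by simpa using hdm, ?_⟩
    rintro (_ | k) hk
    · simpa [hd0] using hac
    · simpa using hd k (by omega)

lemma exists_injective_walk_of_transGen {a b : α} (hab : a ≠ b) (h : TransGen r a b) :
    ∃ (m : ℕ) (d : ℕ → α), 0 < m ∧ d 0 = a ∧ d m = b ∧ (∀ k < m, r (d k) (d (k + 1))) ∧
      ∀ x ≤ m, ∀ y ≤ m, d x = d y → x = y := by
  classical
  have hwalk := exists_walk_of_reflTransGen h.to_reflTransGen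
  obtain ⟨d, hd0, hdm, hd⟩ := Nat.find_spec hwalk
  set m := Nat.find hwalk
  refine ⟨m, d, Nat.pos_of_ne_zero fun h0 => hab (by rw [← hd0, ← hdm, h0]), hd0, hdm, hd, ?_⟩
  -- a shortest walk is injective: a repetition `d x = d y` could be cut out
  intro x hx y hy hxy
  by_contra hne
  wlog hlt : x < y generalizing x y
  · exact this y hy x hx hxy.symm (Ne.symm hne) (by omega)
  refine Nat.find_min hwalk (m := m - (y - x)) (by omega)
    ⟨fun k => if k ≤ x then d k else d (k + (y - x)), by simp [hd0], ?_, fun k hk => ?_⟩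
  · dsimp only
    split_ifs with h
    · rw [show m - (y - x) = x by omega, hxy, show y = m by omega, hdm]
    · rw [Nat.sub_add_cancel (by omega), hdm]
  · dsimp only
    split_ifs with h1 h2 h2
    · exact hd k (by omega)
    · rw [show k = x by omega, hxy, show x + 1 + (y - x) = y + 1 by omega]
      exact hd y (by omega)
    · omega
    · rw [show k + 1 + (y - x) = k + (y - x) + 1 by omega]
      exact hd _ (by omega)

end Walks

section Paths

open Relation

variable {G : MixedGraph V}

lemma MixedGraph.mem_anc_union_of_transGen {a b x y : V} (hxa : x ≠ a) (hxb : x ≠ b)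
    (h : TransGen G.arrow x y) (hy : y ∈ G.anc a ∪ G.anc b ∨ y = a ∨ y = b) :
    x ∈ G.anc a ∪ G.anc b := by
  rcases hy with (hy | hy) | rfl | rfl
  · exact .inl ⟨hxa, h.trans hy.2⟩
  · exact .inr ⟨hxb, h.trans hy.2⟩
  · exact .inl ⟨hxa, h⟩
  · exact .inr ⟨hxb, h⟩

lemma MixedGraph.mem_ancSet_of_transGen {C : Set V} {x y : V} (hy : y ∈ C) (hxy : x ≠ y)
    (h : TransGen G.arrow x y) (hx : x ∉ C) : x ∈ G.ancSet C :=
  ⟨Set.mem_biUnion hy ⟨hxy, h⟩, hx⟩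

lemma MixedGraph.ancSet_pair (i j : V) : G.ancSet {i, j} = (G.anc i ∪ G.anc j) \ {i, j} := by
  rw [MixedGraph.ancSet, Set.biUnion_pair]

lemma MixedGraph.mem_anc_union_of_mem_ancSet_pair {a b x : V}
    (hx : x ∈ G.ancSet {a, b} ∪ G.ancSet (G.ancSet {a, b})) (hxa : x ≠ a) (hxb : x ≠ b) :
    x ∈ G.anc a ∪ G.anc b := by
  rcases hx with hx | ⟨hx, -⟩
  · exact (G.ancSet_pair a b ▸ hx).1
  · obtain ⟨c, hc, hxc⟩ := Set.mem_iUnion₂.1 hx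
    exact G.mem_anc_union_of_transGen hxa hxb hxc.2 (.inl (G.ancSet_pair a b ▸ hc).1)

namespace PathIn

variable (p : PathIn G)

lemma v_ne_v_zero {r : ℕ} (h0 : 0 < r) (hr : r ≤ p.n) : p.v r ≠ p.v 0 := fun h =>
  h0.ne' (p.inj r hr 0 (Nat.zero_le _) h)

lemma v_ne_v_n {r : ℕ} (hr : r < p.n) : p.v r ≠ p.v p.n := fun h =>
  hr.ne (p.inj r hr.le p.n le_rfl h)

lemma e_eq_fwd_of_not_headLeft {r : ℕ} (h : ¬ p.headLeft r) : p.e r = .fwd := by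
  unfold headLeft at h
  cases hr : p.e r <;> simp_all

lemma e_eq_bwd_of_not_headRight {r : ℕ} (h : ¬ p.headRight r) : p.e r = .bwd := by
  unfold headRight at h
  cases hr : p.e r <;> simp_all

lemma arrow_of_e_eq_fwd {k : ℕ} (hk : k < p.n) (h : p.e k = .fwd) :
    G.arrow (p.v k) (p.v (k + 1)) := by
  simpa [h, MixedGraph.IsEdgeDir] using p.edge k hk

lemma not_collider_of_e_eq_fwd {r : ℕ} (h : p.e r = .fwd) : ¬ p.Collider r := by
  simp [Collider, headLeft, h]

def HeadsInSC (r : ℕ) : Prop :=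
  (p.headLeft (r - 1) → p.v (r - 1) ∈ G.sc (p.v r)) ∧
    (p.headRight r → p.v (r + 1) ∈ G.sc (p.v r))

def Connecting (S C : Set V) : Prop :=
  ∀ r, 1 ≤ r → r < p.n →
    (p.Collider r → p.v r ∈ S) ∧ (¬ p.Collider r → p.v r ∉ C ∨ p.HeadsInSC r)

def reverse : PathIn G where
  n := p.n
  v t := p.v (p.n - t)
  e t := (p.e (p.n - 1 - t)).flip
  one_le := p.one_le
  edge r hr := by
    have h := p.edge (p.n - 1 - r) (by omega)
    rw [show p.n - 1 - r + 1 = p.n - r by omega] at h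
    rw [show p.n - (r + 1) = p.n - 1 - r by omega]
    revert h
    cases p.e (p.n - 1 - r) <;> simp only [MixedGraph.IsEdgeDir, EDir.flip] <;> tauto
  inj r hr s hs h := by
    have := p.inj (p.n - r) (by omega) (p.n - s) (by omega) h
    omega

@[simp] lemma reverse_n : p.reverse.n = p.n := rfl

lemma reverse_v (t : ℕ) : p.reverse.v t = p.v (p.n - t) := rfl

lemma reverse_headLeft (t : ℕ) : p.reverse.headLeft t ↔ p.headRight (p.n - 1 - t) := by
  change (p.e _).flip = _ ∨ (p.e _).flip = _ ↔ _
  unfold headRight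
  cases p.e (p.n - 1 - t) <;> simp [EDir.flip]

lemma reverse_headRight (t : ℕ) : p.reverse.headRight t ↔ p.headLeft (p.n - 1 - t) := by
  change (p.e _).flip = _ ∨ (p.e _).flip = _ ↔ _
  unfold headLeft
  cases p.e (p.n - 1 - t) <;> simp [EDir.flip]

lemma reverse_e_eq_fwd {t : ℕ} (h : p.e (p.n - 1 - t) = .bwd) : p.reverse.e t = .fwd := by
  change (p.e _).flip = _
  rw [h, EDir.flip]

lemma reverse_collider {r : ℕ} (h1 : 1 ≤ r) (h2 : r < p.n) :
    p.reverse.Collider r ↔ p.Collider (p.n - r) := by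
  rw [Collider, Collider, reverse_headLeft, reverse_headRight,
    show p.n - 1 - (r - 1) = p.n - r by omega, show p.n - 1 - r = p.n - r - 1 by omega, and_comm]

lemma reverse_headsInSC {r : ℕ} (h1 : 1 ≤ r) (h2 : r < p.n) :
    p.reverse.HeadsInSC r ↔ p.HeadsInSC (p.n - r) := by
  rw [HeadsInSC, HeadsInSC, reverse_headLeft, reverse_headRight, reverse_v, reverse_v, reverse_v,
    show p.n - 1 - (r - 1) = p.n - r by omega, show p.n - 1 - r = p.n - r - 1 by omega,
    show p.n - (r - 1) = p.n - r + 1 by omega, show p.n - (r + 1) = p.n - r - 1 by omega, and_comm]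

lemma Connecting.reverse {p : PathIn G} {S C : Set V} (hp : p.Connecting S C) :
    p.reverse.Connecting S C := by
  intro r h1 (h2 : r < p.n)
  rw [p.reverse_collider h1 h2, p.reverse_headsInSC h1 h2]
  exact hp (p.n - r) (by omega) (by omega)

open Classical in
noncomputable def blockedColliders (C : Set V) : Finset ℕ :=
  (Finset.Ioo 0 p.n).filter fun r => p.Collider r ∧ p.v r ∉ C ∪ G.ancSet C

lemma mem_blockedColliders {C : Set V} {r : ℕ} :
    r ∈ p.blockedColliders C ↔ (0 < r ∧ r < p.n) ∧ p.Collider r ∧ p.v r ∉ C ∪ G.ancSet C := by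
  classical
  rw [blockedColliders, Finset.mem_filter, Finset.mem_Ioo]

lemma sub_mem_blockedColliders_reverse {C : Set V} {r : ℕ} :
    p.n - r ∈ p.reverse.blockedColliders C ↔ r ∈ p.blockedColliders C := by
  rw [mem_blockedColliders, mem_blockedColliders, reverse_v, reverse_n]
  constructor
  · rintro ⟨hr, hcol, hC⟩
    rw [p.reverse_collider (by omega) hr.2, Nat.sub_sub_self (by omega)] at hcol
    rw [Nat.sub_sub_self (by omega)] at hC
    exact ⟨by omega, hcol, hC⟩
  · rintro ⟨hr, hcol, hC⟩
    rw [p.reverse_collider (by omega) (by omega), Nat.sub_sub_self (by omega)]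
    exact ⟨by omega, hcol, hC⟩

lemma card_blockedColliders_reverse (C : Set V) :
    (p.reverse.blockedColliders C).card = (p.blockedColliders C).card := by
  have hlt {q : PathIn G} {r : ℕ} (hr : r ∈ q.blockedColliders C) : r < q.n :=
    ((q.mem_blockedColliders).1 hr).1.2
  refine Finset.card_nbij' (p.n - ·) (p.n - ·) ?_ ?_ ?_ ?_ <;> intro r hr
  · refine p.sub_mem_blockedColliders_reverse.1 ?_
    rwa [show p.n - (p.n - r) = r from Nat.sub_sub_self (hlt hr).le]
  · exact p.sub_mem_blockedColliders_reverse.2 hr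
  · exact Nat.sub_sub_self (hlt hr).le
  · exact Nat.sub_sub_self (hlt hr).le

lemma collider_congr_prefix {p w : PathIn G} {s k : ℕ} (he : ∀ k < s, w.e k = p.e k)
    (hk : 1 ≤ k) (hks : k < s) :
    w.Collider k ↔ p.Collider k := by
  simp only [Collider, headLeft, headRight, he (k - 1) (by omega), he k hks]

lemma headsInSC_congr_prefix {p w : PathIn G} {s k : ℕ} (hv : ∀ k ≤ s, w.v k = p.v k)
    (he : ∀ k < s, w.e k = p.e k) (hk : 1 ≤ k) (hks : k < s) :
    w.HeadsInSC k ↔ p.HeadsInSC k := by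
  simp only [HeadsInSC, headLeft, headRight, he (k - 1) (by omega), he k hks,
    hv (k - 1) (by omega), hv k hks.le, hv (k + 1) hks]

def IsDirected : Prop := ∀ k < p.n, p.e k = .fwd

lemma IsDirected.transGen {p : PathIn G} (hp : p.IsDirected) {u : ℕ} (hu0 : 0 < u)
    (hu : u ≤ p.n) : TransGen G.arrow (p.v 0) (p.v u) := by
  induction u with
  | zero => omega
  | succ u ih =>
    have harr := p.arrow_of_e_eq_fwd (by omega) (hp u (by omega))
    rcases Nat.eq_zero_or_pos u with rfl | hu0'
    · exact .single harr
    · exact (ih hu0' (by omega)).tail harr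

lemma exists_isDirected_of_transGen {x y : V} (hxy : x ≠ y) (h : TransGen G.arrow x y) :
    ∃ d : PathIn G, d.IsDirected ∧ d.v 0 = x ∧ d.v d.n = y := by
  obtain ⟨m, d, hm, hd0, hdm, hd, hinj⟩ := exists_injective_walk_of_transGen hxy h
  exact ⟨⟨m, d, fun _ => .fwd, hm, hd, hinj⟩, fun _ _ => rfl, hd0, hdm⟩

lemma exists_splice (p q : PathIn G) {s t : ℕ} (hs : s ≤ p.n) (ht : t < q.n)
    (hst : p.v s = q.v t) (hdisj : ∀ a < s, ∀ b ≤ q.n, p.v a ≠ q.v b) :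
    ∃ w : PathIn G, w.n = s + (q.n - t) ∧ (∀ k ≤ s, w.v k = p.v k) ∧ (∀ k < s, w.e k = p.e k) ∧
      ∀ k, s ≤ k → w.v k = q.v (t + (k - s)) ∧ w.e k = q.e (t + (k - s)) := by
  set v : ℕ → V := fun k => if k ≤ s then p.v k else q.v (t + (k - s))
  have hv_lo : ∀ k ≤ s, v k = p.v k := fun k hk => if_pos hk
  have hv_hi : ∀ k, s ≤ k → v k = q.v (t + (k - s)) := by
    intro k hk
    rcases hk.eq_or_lt with rfl | hk
    · rw [hv_lo s le_rfl, hst, Nat.sub_self, Nat.add_zero]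
    · exact if_neg (by omega)
  set e : ℕ → EDir := fun k => if k < s then p.e k else q.e (t + (k - s))
  have he_lo : ∀ k < s, e k = p.e k := fun k hk => if_pos hk
  have he_hi : ∀ k, s ≤ k → e k = q.e (t + (k - s)) := fun k hk => if_neg (by omega)
  have hmix : ∀ x ≤ s, ∀ y, s < y → y ≤ s + (q.n - t) → v x ≠ v y := by
    intro x hx y hy hyn hxy
    rw [hv_lo x hx, hv_hi y hy.le] at hxy
    rcases hx.lt_or_eq with hx | rfl
    · exact hdisj x hx _ (by omega) hxy
    · rw [hst] at hxy
      have := q.inj _ ht.le _ (by omega) hxy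
      omega
  refine ⟨⟨s + (q.n - t), v, e, by omega, fun k hk => ?_, fun x hx y hy hxy => ?_⟩,
    rfl, hv_lo, he_lo, fun k hk => ⟨hv_hi k hk, he_hi k hk⟩⟩
  · rcases lt_or_ge k s with hks | hks
    · rw [hv_lo k hks.le, hv_lo (k + 1) hks, he_lo k hks]
      exact p.edge k (by omega)
    · rw [hv_hi k hks, hv_hi (k + 1) (by omega), he_hi k hks,
        show t + (k + 1 - s) = t + (k - s) + 1 by omega]
      exact q.edge _ (by omega)
  · rcases le_or_gt x s with hxs | hxs <;> rcases le_or_gt y s with hys | hys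
    · rw [hv_lo x hxs, hv_lo y hys] at hxy
      exact p.inj x (by omega) y (by omega) hxy
    · exact absurd hxy (hmix x hxs y hys hy)
    · exact absurd hxy.symm (hmix y hys x hxs hx)
    · rw [hv_hi x hxs.le, hv_hi y hys.le] at hxy
      have := q.inj _ (by omega) _ (by omega) hxy
      omega

/-- Follow `p` until it first meets the directed path `d` from `p.v r` to the end of `p`, then
follow `d`. -/
lemma exists_shortcut {d : PathIn G} (hd : d.IsDirected) {r : ℕ} (hr : r < p.n)
    (hd0 : d.v 0 = p.v r) (hdn : d.v d.n = p.v p.n) :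
    ∃ s ≤ r, ∃ w : PathIn G, w.v 0 = p.v 0 ∧ w.v w.n = p.v p.n ∧ (∀ k ≤ s, w.v k = p.v k) ∧
      (∀ k < s, w.e k = p.e k) ∧
        ∀ k, s ≤ k → k < w.n → w.e k = .fwd ∧ ∃ u < d.n, w.v k = d.v u := by
  classical
  have hmeet : ∃ s, ∃ t ≤ d.n, p.v s = d.v t := ⟨r, 0, Nat.zero_le _, hd0.symm⟩
  obtain ⟨t, ht, hst⟩ := Nat.find_spec hmeet
  have hsr : Nat.find hmeet ≤ r := Nat.find_min' hmeet ⟨0, Nat.zero_le _, hd0.symm⟩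
  set s := Nat.find hmeet
  have htn : t < d.n := by
    refine ht.lt_of_ne fun htn => p.v_ne_v_n (r := s) (by omega) ?_
    rw [hst, htn, hdn]
  obtain ⟨w, hwn, hv_lo, he_lo, hhi⟩ := p.exists_splice d (by omega) htn hst
    fun a ha b hb hab => Nat.find_min hmeet ha ⟨b, hb, hab⟩
  refine ⟨s, hsr, w, by rw [hv_lo 0 (Nat.zero_le _)], ?_, hv_lo, he_lo, fun k hk hkw => ?_⟩
  · rw [(hhi _ (by omega)).1, hwn, show t + (s + (d.n - t) - s) = d.n by omega, hdn]
  · rw [(hhi k hk).2, (hhi k hk).1]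
    exact ⟨hd _ (by omega), _, by omega, rfl⟩

lemma Connecting.exists_fewer_blocked_of_mem_anc_end {p : PathIn G} {S C : Set V}
    (hp : p.Connecting S C) {r : ℕ} (hr : r ∈ p.blockedColliders C)
    (hanc : p.v r ∈ G.anc (p.v p.n)) :
    ∃ q : PathIn G, q.v 0 = p.v 0 ∧ q.v q.n = p.v p.n ∧ q.Connecting S C ∧
      (q.blockedColliders C).card < (p.blockedColliders C).card := by
  obtain ⟨⟨-, hrn⟩, -, hrC⟩ := p.mem_blockedColliders.1 hr
  obtain ⟨d, hd, hd0, hdn⟩ := exists_isDirected_of_transGen hanc.1 hanc.2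
  have hdC : ∀ u ≤ d.n, d.v u ∉ C := by
    intro u hu huC
    rcases Nat.eq_zero_or_pos u with rfl | hu0
    · exact hrC (.inl (hd0 ▸ huC))
    · refine hrC (.inr (G.mem_ancSet_of_transGen huC ?_ (hd0 ▸ hd.transGen hu0 hu)
        fun h => hrC (.inl h)))
      rw [← hd0]
      exact (d.v_ne_v_zero hu0 hu).symm
  obtain ⟨s, hsr, w, hw0, hwn, hv, he, hhi⟩ := p.exists_shortcut hd hrn hd0 hdn
  have hw_hi : ∀ k, s ≤ k → k < w.n → ¬ w.Collider k ∧ w.v k ∉ C := by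
    intro k hk hkw
    obtain ⟨hfwd, u, hu, hwu⟩ := hhi k hk hkw
    exact ⟨w.not_collider_of_e_eq_fwd hfwd, hwu ▸ hdC u hu.le⟩
  have hsub : w.blockedColliders C ⊆ (p.blockedColliders C).erase r := by
    intro k hk
    obtain ⟨⟨hk0, hkw⟩, hkcol, hkC⟩ := w.mem_blockedColliders.1 hk
    have hks : k < s := by_contra fun h => (hw_hi k (by omega) hkw).1 hkcol
    rw [collider_congr_prefix he hk0 hks] at hkcol
    rw [hv k hks.le] at hkC
    rw [Finset.mem_erase, mem_blockedColliders]
    exact ⟨by omega, ⟨hk0, by omega⟩, hkcol, hkC⟩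
  refine ⟨w, hw0, hwn, fun k hk1 hkw => ?_,
    (Finset.card_le_card hsub).trans_lt (Finset.card_erase_lt_of_mem hr)⟩
  rcases lt_or_ge k s with hks | hks
  · rw [collider_congr_prefix he hk1 hks, headsInSC_congr_prefix hv he hk1 hks, hv k hks.le]
    exact hp k hk1 (by omega)
  · exact ⟨fun h => absurd h (hw_hi k hks hkw).1, fun _ => .inl (hw_hi k hks hkw).2⟩

lemma Connecting.exists_fewer_blocked {p : PathIn G} {S C : Set V} (hp : p.Connecting S C)
    {r : ℕ} (hr : r ∈ p.blockedColliders C) (hanc : p.v r ∈ G.anc (p.v 0) ∪ G.anc (p.v p.n)) :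
    ∃ q : PathIn G, q.v 0 = p.v 0 ∧ q.v q.n = p.v p.n ∧ q.Connecting S C ∧
      (q.blockedColliders C).card < (p.blockedColliders C).card := by
  rcases hanc with hanc | hanc
  · have hrn : r ≤ p.n := (p.mem_blockedColliders.1 hr).1.2.le
    obtain ⟨q, hq0, hqn, hq, hcard⟩ := hp.reverse.exists_fewer_blocked_of_mem_anc_end
      (p.sub_mem_blockedColliders_reverse.2 hr)
      (by rwa [reverse_v, reverse_v, Nat.sub_sub_self hrn, reverse_n, Nat.sub_self])
    refine ⟨q.reverse, ?_, ?_, hq.reverse, ?_⟩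
    · rw [reverse_v, Nat.sub_zero, hqn, reverse_v, reverse_n, Nat.sub_self]
    · rw [reverse_v, reverse_n, Nat.sub_self, hq0, reverse_v, Nat.sub_zero]
    · rwa [card_blockedColliders_reverse, ← p.card_blockedColliders_reverse]
  · exact hp.exists_fewer_blocked_of_mem_anc_end hr hanc

lemma Connecting.sigmaConnecting {p : PathIn G} {S C : Set V} (hp : p.Connecting S C)
    (h : p.blockedColliders C = ∅) : p.SigmaConnecting C := by
  refine fun r h1 h2 => ⟨fun hcol => by_contra fun hC => ?_, (hp r h1 h2).2⟩
  have : r ∈ p.blockedColliders C := p.mem_blockedColliders.2 ⟨⟨h1, h2⟩, hcol, hC⟩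
  simp [h] at this

theorem Connecting.exists_sigmaConnecting {p : PathIn G} {C : Set V}
    (hp : p.Connecting (G.anc (p.v 0) ∪ G.anc (p.v p.n)) C) :
    ∃ q : PathIn G, q.v 0 = p.v 0 ∧ q.v q.n = p.v p.n ∧ q.SigmaConnecting C := by
  induction hN : (p.blockedColliders C).card using Nat.strong_induction_on generalizing p with
  | _ N ih =>
  obtain hempty | ⟨r, hr⟩ := (p.blockedColliders C).eq_empty_or_nonempty
  · exact ⟨p, rfl, rfl, hp.sigmaConnecting hempty⟩
  obtain ⟨⟨h1, h2⟩, hcol, -⟩ := p.mem_blockedColliders.1 hr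
  obtain ⟨q, hq0, hqn, hq, hcard⟩ := hp.exists_fewer_blocked hr ((hp r h1 h2).1 hcol)
  rw [← hq0, ← hqn] at hq
  obtain ⟨q', h0, hn, hq'⟩ := ih _ (hN ▸ hcard) hq rfl
  exact ⟨q', h0.trans hq0, hn.trans hqn, hq'⟩

lemma transGen_collider_or_end_of_e_eq_fwd {r : ℕ} (hr : r < p.n) (he : p.e r = .fwd) :
    (∃ k, r < k ∧ k < p.n ∧ p.Collider k ∧ TransGen G.arrow (p.v r) (p.v k)) ∨
      TransGen G.arrow (p.v r) (p.v p.n) := by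
  have harr := p.arrow_of_e_eq_fwd hr he
  by_cases hend : r + 1 = p.n
  · exact .inr (hend ▸ .single harr)
  by_cases hcol : p.Collider (r + 1)
  · exact .inl ⟨r + 1, by omega, by omega, hcol, .single harr⟩
  have he' : p.e (r + 1) = .fwd :=
    p.e_eq_fwd_of_not_headLeft fun hl => hcol ⟨by simp [headRight, he], hl⟩
  rcases transGen_collider_or_end_of_e_eq_fwd (r := r + 1) (by omega) he' with
    ⟨k, hk1, hk2, hk, ht⟩ | ht
  · exact .inl ⟨k, by omega, hk2, hk, .head harr ht⟩
  · exact .inr (.head harr ht)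
termination_by p.n - r

lemma transGen_collider_or_endpoint {r : ℕ} (h1 : 1 ≤ r) (h2 : r < p.n)
    (hcol : ¬ p.Collider r) :
    (∃ k, 1 ≤ k ∧ k < p.n ∧ p.Collider k ∧ TransGen G.arrow (p.v r) (p.v k)) ∨
      TransGen G.arrow (p.v r) (p.v 0) ∨ TransGen G.arrow (p.v r) (p.v p.n) := by
  by_cases hl : p.headLeft r
  · have hbwd : p.e (r - 1) = .bwd := p.e_eq_bwd_of_not_headRight fun hr => hcol ⟨hr, hl⟩
    have hfwd : p.reverse.e (p.n - r) = .fwd :=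
      p.reverse_e_eq_fwd (by rwa [show p.n - 1 - (p.n - r) = r - 1 by omega])
    rcases p.reverse.transGen_collider_or_end_of_e_eq_fwd (by simp only [reverse_n]; omega) hfwd
      with ⟨k, hk1, hk2, hk, ht⟩ | ht
    · simp only [reverse_n] at hk2
      rw [reverse_v, reverse_v, Nat.sub_sub_self h2.le] at ht
      exact .inl ⟨p.n - k, by omega, by omega, (p.reverse_collider (by omega) hk2).1 hk, ht⟩
    · rw [reverse_v, reverse_v, reverse_n, Nat.sub_sub_self h2.le, Nat.sub_self] at ht
      exact .inr (.inl ht)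
  · rcases p.transGen_collider_or_end_of_e_eq_fwd h2 (p.e_eq_fwd_of_not_headLeft hl) with
      ⟨k, hk1, hk2, hk, ht⟩ | ht
    · exact .inl ⟨k, by omega, hk2, hk, ht⟩
    · exact .inr (.inr ht)

lemma SigmaConnecting.mem_anc_endpoints {p : PathIn G}
    (hp : p.SigmaConnecting (G.ancSet {p.v 0, p.v p.n})) {r : ℕ} (h1 : 1 ≤ r) (h2 : r < p.n) :
    p.v r ∈ G.anc (p.v 0) ∪ G.anc (p.v p.n) := by
  have hcol_mem : ∀ k, 1 ≤ k → k < p.n → p.Collider k →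
      p.v k ∈ G.anc (p.v 0) ∪ G.anc (p.v p.n) := fun k hk1 hk2 hk =>
    G.mem_anc_union_of_mem_ancSet_pair ((hp k hk1 hk2).1 hk) (p.v_ne_v_zero hk1 hk2.le)
      (p.v_ne_v_n hk2)
  by_cases hcol : p.Collider r
  · exact hcol_mem r h1 h2 hcol
  have hne {y : V} := G.mem_anc_union_of_transGen (y := y) (p.v_ne_v_zero h1 h2.le) (p.v_ne_v_n h2)
  rcases p.transGen_collider_or_endpoint h1 h2 hcol with ⟨k, hk1, hk2, hk, ht⟩ | ht | ht
  · exact hne ht (.inl (hcol_mem k hk1 hk2 hk))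
  · exact hne ht (.inr (.inl rfl))
  · exact hne ht (.inr (.inr rfl))

lemma SigmaConnecting.connecting_anc_endpoints {p : PathIn G}
    (hp : p.SigmaConnecting (G.ancSet {p.v 0, p.v p.n})) (C : Set V) :
    p.Connecting (G.anc (p.v 0) ∪ G.anc (p.v p.n)) C := by
  intro r h1 h2
  have hr := hp.mem_anc_endpoints h1 h2
  refine ⟨fun _ => hr, fun hcol => .inr (((hp r h1 h2).2 hcol).resolve_left ?_)⟩
  rw [not_not, G.ancSet_pair]
  simp only [Set.mem_sdiff, Set.mem_insert_iff, Set.mem_singleton_iff, not_or]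
  exact ⟨hr, p.v_ne_v_zero h1 h2.le, p.v_ne_v_n h2⟩

end PathIn

theorem sigmaSep_ancSet_pair_of_sigmaSep {i j : V} {C : Set V} (h : SigmaSep G {i} {j} C) :
    SigmaSep G {i} {j} (G.ancSet {i, j}) := by
  rintro ⟨p, rfl, rfl, hp⟩
  obtain ⟨q, hq0, hqn, hq⟩ := (hp.connecting_anc_endpoints C).exists_sigmaConnecting
  exact h ⟨q, hq0, hqn, hq⟩

end Paths

section Statements

variable [Fintype V]

theorem stmt1_general (G : MixedGraph V) (hmax : MaximalGraph G)
    (P : Measure (∀ i, X i))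
    (hGM : GlobalMarkovSigma G P) :
    PairwiseMarkov G P := by
  intro i j hij hadj
  obtain ⟨-, C, -, -, hsep⟩ := hmax i j hij hadj
  refine hGM {i} {j} (G.ancSet {i, j}) ?_ ?_ ?_ (sigmaSep_ancSet_pair_of_sigmaSep hsep)
  · simpa using hij
  · simp [MixedGraph.ancSet]
  · simp [MixedGraph.ancSet]

/-- For a maximal BDMG `G`, the global Markov property implies the pairwise
Markov property. -/
theorem stmt1 (G : MixedGraph V) (hG : G.IsBDMG) (hmax : MaximalGraph G)
    (P : Measure (∀ i, X i)) (hP : IsProbabilityMeasure P)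
    (hGM : GlobalMarkovSigma G P) :
    PairwiseMarkov G P :=
  stmt1_general G hmax P hGM

end Statements

end CausalAxioms
end

section
/- Let 𝒫_do = {P_do(i)}_{i∈V} be an interventional family whose members P_do(i) each satisfy singleton-transitivity. Assume that for all distinct i,j,k ∈ V with i ∉ cause(k) and j ∈ cause(k): (a) i ⊥_{P_do(i)} k | j, and (b) j ⊥̸_{P_do(i)} k. Then 𝒫_do is a transitive interventional family: for all distinct i,j,k, i ∈ cause(j) and j ∈ cause(k) imply i ∈ cause(k). -/
open MeasureTheory ProbabilityTheory

namespace CausalAxioms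

/-! ### Conditional independence for coordinates of a product space -/

variable {V : Type} {X : V → Type} [∀ i, MeasurableSpace (X i)]

/-! ### Interventional families -/

variable (Pdo : V → Measure (∀ i, X i))

variable {Ω : Type} [MeasurableSpace Ω] {E : V → Type} [∀ i, MeasurableSpace (E i)]

theorem CI.symm {P : Measure (∀ i, X i)} {A B C : Set V} (h : CI P A B C) : CI P B A C := by
  intro s t hs ht
  simpa only [Set.inter_comm, mul_comm] using h t s ht hs

theorem SingletonTransProp.ci_or_ci_of_ci_of_ci_singleton {P : Measure (∀ i, X i)}
    (hP : SingletonTransProp P) {i j k : V} (hij : i ≠ j) (hik : i ≠ k) (hjk : j ≠ k)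
    (hik₀ : CI P {i} {k} ∅) (hikj : CI P {i} {k} {j}) : CI P {i} {j} ∅ ∨ CI P {j} {k} ∅ := by
  rw [← Set.empty_union {j}] at hikj
  exact (hP i k j ∅ hik hij hjk.symm (Set.notMem_empty i) (Set.notMem_empty k)
    (Set.notMem_empty j) hik₀ hikj).imp_right CI.symm

theorem ci_of_notMem_cause {Pdo : V → Measure (∀ i, X i)} {i k : V} (hik : i ≠ k)
    (h : i ∉ cause Pdo k) : CI (Pdo i) {i} {k} ∅ :=
  not_not.mp fun hdep => h ⟨hik, hdep⟩

section Statements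


variable [Fintype V]

theorem stmt5_general (Pdo : V → Measure (∀ i, X i))
    (hst : ∀ i, SingletonTransProp (Pdo i))
    (ha : ∀ i j k : V, i ≠ j → i ≠ k → j ≠ k → i ∉ cause Pdo k → j ∈ cause Pdo k →
      CI (Pdo i) {i} {k} {j})
    (hb : ∀ i j k : V, i ≠ j → i ≠ k → j ≠ k → i ∉ cause Pdo k → j ∈ cause Pdo k →
      ¬ CI (Pdo i) {j} {k} ∅) :
    TransitiveFam Pdo := by
  intro i j k hij hjk hik hicj hjck
  by_contra hick
  rcases (hst i).ci_or_ci_of_ci_of_ci_singleton hij hik hjk (ci_of_notMem_cause hik hick)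
      (ha i j k hij hik hjk hick hjck) with hij₀ | hjk₀
  · exact hicj.2 hij₀
  · exact hb i j k hij hik hjk hick hjck hjk₀

/-- An interventional family whose members satisfy singleton-transitivity and
conditions (a), (b) is transitive. -/
theorem stmt5 (Pdo : V → Measure (∀ i, X i))
    (hprob : ∀ i, IsProbabilityMeasure (Pdo i))
    (hst : ∀ i, SingletonTransProp (Pdo i))
    (ha : ∀ i j k : V, i ≠ j → i ≠ k → j ≠ k → i ∉ cause Pdo k → j ∈ cause Pdo k →
      CI (Pdo i) {i} {k} {j})
    (hb : ∀ i j k : V, i ≠ j → i ≠ k → j ≠ k → i ∉ cause Pdo k → j ∈ cause Pdo k →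
      ¬ CI (Pdo i) {j} {k} ∅) :
    TransitiveFam Pdo :=
  stmt5_general Pdo hst ha hb

end Statements

end CausalAxioms
end

section
/- Let 𝒫_do = {P_do(i)}_{i∈V} be a transitive interventional family such that P_do(i) satisfies the composition property. If i ∉ cause(k), then i ⊥_{P_do(i)} k | cause(k). -/
open MeasureTheory ProbabilityTheory

namespace CausalAxioms

/-! ### Conditional independence for coordinates of a product space -/

variable {V : Type} {X : V → Type} [∀ i, MeasurableSpace (X i)]

/-! ### Interventional families -/

variable (Pdo : V → Measure (∀ i, X i))

variable {Ω : Type} [MeasurableSpace Ω] {E : V → Type} [∀ i, MeasurableSpace (E i)]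

/-! By transitivity, every cause of `k` is, like `k` itself, independent of `i` under `P_do(i)`.
Composition assembles these into `i ⊥ {k} ∪ cause(k)`, and weak union then moves `cause(k)`
into the conditioning set. -/

theorem condExp_inter_ae_eq_mul_of_indep {α : Type*} {m m₁ m₂ m' : MeasurableSpace α}
    {μ : Measure[m] α} [IsProbabilityMeasure μ] (hle₁ : m₁ ≤ m) (hle₂ : m₂ ≤ m) (hm' : m' ≤ m₂)
    (hindp : Indep m₁ m₂ μ) {s t : Set α} (hs : MeasurableSet[m₁] s) (ht : MeasurableSet[m₂] t) :
    μ⟦s ∩ t | m'⟧ =ᵐ[μ] μ⟦s | m'⟧ * μ⟦t | m'⟧ := by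
  have hs_const : ∀ {m'' : MeasurableSpace α}, m'' ≤ m₂ → μ⟦s | m''⟧ =ᵐ[μ] fun _ => μ.real s := by
    intro m'' hm''
    refine (condExp_indep_eq hle₁ (hm''.trans hle₂) (stronglyMeasurable_const.indicator hs)
      (indep_of_indep_of_le_right hindp hm'')).trans ?_
    simp [integral_indicator_const _ (hle₁ _ hs)]
  have hint : ∀ u, MeasurableSet[m] u → Integrable (u.indicator fun _ => (1 : ℝ)) μ :=
    fun u hu => (integrable_const 1).indicator hu
  have hst : (s ∩ t).indicator (fun _ => (1 : ℝ))
      = t.indicator (fun _ => 1) * s.indicator (fun _ => 1) := by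
    rw [Set.inter_comm]
    exact Set.inter_indicator_one
  -- `1_t` is `m₂`-measurable and pulls out, while `1_s` is independent of `m₂`.
  have hcond_m₂ : μ⟦s ∩ t | m₂⟧ =ᵐ[μ] μ.real s • t.indicator fun _ => (1 : ℝ) := by
    rw [hst]
    refine (condExp_mul_of_stronglyMeasurable_left (stronglyMeasurable_const.indicator ht)
      (hst ▸ hint _ ((hle₁ _ hs).inter (hle₂ _ ht))) (hint _ (hle₁ _ hs))).trans ?_
    filter_upwards [hs_const le_rfl] with x hx
    simp [hx, mul_comm]
  calc μ⟦s ∩ t | m'⟧ =ᵐ[μ] μ[μ⟦s ∩ t | m₂⟧ | m'] := (condExp_condExp_of_le hm' hle₂).symm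
    _ =ᵐ[μ] μ[μ.real s • t.indicator fun _ => (1 : ℝ) | m'] := condExp_congr_ae hcond_m₂
    _ =ᵐ[μ] μ.real s • μ⟦t | m'⟧ := condExp_smul _ _ _
    _ =ᵐ[μ] μ⟦s | m'⟧ * μ⟦t | m'⟧ := by
      filter_upwards [hs_const hm'] with x hx
      simp [hx]

theorem coordσ_le_pi (A : Set V) : coordσ X A ≤ MeasurableSpace.pi :=
  A.measurable_restrict.comap_le

theorem coordσ_mono {A B : Set V} (h : A ⊆ B) : coordσ X A ≤ coordσ X B :=
  ((Set.measurable_restrict₂ h).comp (comap_measurable B.domRestrict)).comap_le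

theorem coordσ_empty : coordσ X (∅ : Set V) = ⊥ := by
  have h : (MeasurableSpace.pi : MeasurableSpace (∀ j : (∅ : Set V), X j)) = ⊥ :=
    iSup_of_empty _
  rw [coordσ, h, MeasurableSpace.comap_bot]

theorem indep_coordσ_of_CI_empty {P : Measure (∀ i, X i)} [IsProbabilityMeasure P]
    {A B : Set V} (h : CI P A B ∅) : Indep (coordσ X A) (coordσ X B) P := by
  rw [Indep_iff]
  intro s t hs ht
  have hsm := coordσ_le_pi A s hs
  have htm := coordσ_le_pi B t ht
  obtain ⟨x, hx⟩ := (h s t hs ht).exists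
  rw [coordσ_empty, condExp_bot, condExp_bot, condExp_bot] at hx
  simp only [Pi.mul_apply, integral_indicator_const _ hsm, integral_indicator_const _ htm,
    integral_indicator_const _ (hsm.inter htm), smul_eq_mul, mul_one] at hx
  refine (ENNReal.toReal_eq_toReal_iff' (by finiteness) (by finiteness)).mp ?_
  rwa [ENNReal.toReal_mul]

theorem CI_of_CI_union_empty {P : Measure (∀ i, X i)} [IsProbabilityMeasure P] {A B C : Set V}
    (h : CI P A (B ∪ C) ∅) : CI P A B C := fun _ _ hs ht =>
  condExp_inter_ae_eq_mul_of_indep (coordσ_le_pi A) (coordσ_le_pi _)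
    (coordσ_mono Set.subset_union_right) (indep_coordσ_of_CI_empty h) hs
    (coordσ_mono Set.subset_union_left _ ht)

theorem CompositionProp.CI_union_of_forall_CI_singleton {P : Measure (∀ i, X i)}
    (hcomp : CompositionProp P) {A B C D : Set V} (hD : D.Finite) (hAB : Disjoint A B)
    (hAC : Disjoint A C) (hAD : Disjoint A D) (hBC : Disjoint B C) (hBD : Disjoint B D)
    (hCD : Disjoint C D) (hB : CI P A B C) (hsingle : ∀ d ∈ D, CI P A {d} C) :
    CI P A (B ∪ D) C := by
  induction D, hD using Set.Finite.induction_on with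
  | empty => simpa using hB
  | @insert a D haD _ ih =>
    rw [Set.disjoint_insert_right] at hAD hBD hCD
    have hrest := ih hAD.2 hBD.2 hCD.2 fun d hd => hsingle d (Set.mem_insert_of_mem a hd)
    have ha := hcomp A (B ∪ D) C {a} (Set.disjoint_union_right.mpr ⟨hAB, hAD.2⟩) hAC
      (Set.disjoint_singleton_right.mpr hAD.1) (Set.disjoint_union_left.mpr ⟨hBC, hCD.2.symm⟩)
      (Set.disjoint_singleton_right.mpr (by simp [hBD.1, haD]))
      (Set.disjoint_singleton_right.mpr hCD.1)
      hrest (hsingle a (Set.mem_insert a D))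
    rwa [Set.union_assoc, Set.union_singleton] at ha

theorem CI_empty_of_notMem_cause {i k : V} (hik : i ≠ k) (hnc : i ∉ cause Pdo k) :
    CI (Pdo i) {i} {k} ∅ :=
  not_not.mp fun h => hnc ⟨hik, h⟩

theorem TransitiveFam.CI_empty_of_mem_cause (htrans : TransitiveFam Pdo) {i k a : V}
    (hik : i ≠ k) (hnc : i ∉ cause Pdo k) (ha : a ∈ cause Pdo k) : CI (Pdo i) {i} {a} ∅ := by
  have hia : i ≠ a := fun h => hnc (h ▸ ha)
  exact CI_empty_of_notMem_cause Pdo hia fun hi => hnc (htrans i a k hia ha.1 hik hi ha)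

section Statements


variable [Fintype V]

/-- For a transitive interventional family with `P_do(i)` satisfying
composition: if `i ∉ cause(k)` then `i ⊥_{P_do(i)} k | cause(k)`. -/
theorem stmt7 (Pdo : V → Measure (∀ i, X i))
    (hprob : ∀ i, IsProbabilityMeasure (Pdo i))
    (htrans : TransitiveFam Pdo)
    (i k : V) (hik : i ≠ k) (hcomp : CompositionProp (Pdo i))
    (hnc : i ∉ cause Pdo k) :
    CI (Pdo i) {i} {k} (cause Pdo k) := by
  have := hprob i
  have hcauses : ∀ a ∈ cause Pdo k, CI (Pdo i) {i} {a} ∅ :=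
    fun _ ha => htrans.CI_empty_of_mem_cause Pdo hik hnc ha
  refine CI_of_CI_union_empty (hcomp.CI_union_of_forall_CI_singleton (Set.toFinite _)
    ?_ ?_ ?_ ?_ ?_ ?_ (CI_empty_of_notMem_cause Pdo hik hnc) hcauses)
  · exact Set.disjoint_singleton.mpr hik
  · exact Set.disjoint_empty _
  · exact Set.disjoint_singleton_left.mpr hnc
  · exact Set.disjoint_empty _
  · exact Set.disjoint_singleton_left.mpr fun hk => hk.1 rfl
  · exact Set.empty_disjoint _

end Statements

end CausalAxioms
end
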